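/- arXiv:1105.4342 — 17 statements merged into one kernel-verified Lean document; each statement's English description precedes it below -/
import Mathlib

section
/- Let X be a topological space, A a set, and B ⊆ 𝒫(A). Suppose that for every H ∈ B a family D_H ⊆ 𝒫(H) is given, and let D = ⋃_{H∈B} D_H (a subset of 𝒫(A)). If X is [B,A]-compact and, for every H ∈ B, X is [D_H,H]-compact, then X is [D,A]-compact. -/
/-- A topological space `X` is `[B,A]`-compact if every `A`-indexed family of open
sets covering `X` admits a subfamily indexed by some `H ∈ B` which still covers `X`. -/
def BACompact {A : Type*} (B : Set (Set A)) (X : Type*) [TopologicalSpace X] : Prop :=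
  ∀ O : A → Set X, (∀ a, IsOpen (O a)) → (⋃ a, O a) = Set.univ →
    ∃ H ∈ B, (⋃ a ∈ H, O a) = Set.univ

/-- For `S ⊆ A` and `B'` a family of subsets of `S`, `[B',S]`-compactness: every family of
open sets whose members indexed by `S` cover `X` admits `K ∈ B'` indexing a subcover. -/
def RelBACompact {A : Type*} (S : Set A) (B' : Set (Set A)) (X : Type*)
    [TopologicalSpace X] : Prop :=
  ∀ O : A → Set X, (∀ a ∈ S, IsOpen (O a)) → (⋃ a ∈ S, O a) = Set.univ →
    ∃ K ∈ B', (⋃ a ∈ K, O a) = Set.univ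

theorem stmt_1 {A : Type*} (B : Set (Set A)) (X : Type*) [TopologicalSpace X]
    (D : Set A → Set (Set A)) (hD : ∀ H ∈ B, ∀ K ∈ D H, K ⊆ H)
    (hB : BACompact B X) (hH : ∀ H ∈ B, RelBACompact H (D H) X) :
    BACompact (⋃ H ∈ B, D H) X := by
  intro O hO hcov
  obtain ⟨H, hHB, hHcov⟩ := hB O hO hcov
  obtain ⟨K, hK, hKcov⟩ := hH H hHB O (fun a _ => hO a) hHcov
  exact ⟨K, Set.mem_biUnion hHB hK, hKcov⟩
end

section
/- Let A and C be sets, B ⊆ 𝒫(A), let f : C → A be a surjective function, and let D = { f⁻¹(H) | H ∈ B } ⊆ 𝒫(C). Then every [B,A]-compact topological space is [D,C]-compact. -/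
theorem stmt_2 {A C : Type*} (B : Set (Set A)) (f : C → A)
    (hf : Function.Surjective f) (X : Type*) [TopologicalSpace X]
    (hX : BACompact B X) :
    BACompact {D : Set C | ∃ H ∈ B, D = f ⁻¹' H} X := by
  intro O hO hcov
  set O' : A → Set X := fun a => ⋃ c ∈ f ⁻¹' {a}, O c with hO'def
  have hO'open : ∀ a, IsOpen (O' a) := fun a => isOpen_biUnion fun c _ => hO c
  have hO'cov : (⋃ a, O' a) = Set.univ := by
    apply Set.eq_univ_of_univ_subset
    rw [← hcov]
    intro x hx
    obtain ⟨s, ⟨c, rfl⟩, hxs⟩ := hx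
    exact Set.mem_iUnion.2 ⟨f c, Set.mem_biUnion rfl hxs⟩
  obtain ⟨H, hH, hHcov⟩ := hX O' hO'open hO'cov
  refine ⟨f ⁻¹' H, ⟨H, hH, rfl⟩, ?_⟩
  apply Set.eq_univ_of_univ_subset
  rw [← hHcov]
  intro x hx
  obtain ⟨a, ha, hxa⟩ := Set.mem_iUnion₂.1 hx
  obtain ⟨c, hc, hxc⟩ := Set.mem_iUnion₂.1 hxa
  exact Set.mem_iUnion₂.2 ⟨c, by simp only [Set.mem_preimage, Set.mem_singleton_iff] at hc; rw [Set.mem_preimage, hc]; exact ha, hxc⟩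
end

section
/- Let A be a set, B ⊆ 𝒫(A), and X a topological space. Then X is [B,A]-compact if and only if for every A-indexed family (P_a)_{a∈A} of subsets of X such that ⋂_{a∈H} P_a ≠ ∅ for every H ∈ B, one has ⋂_{a∈A} closure(P_a) ≠ ∅. -/
theorem stmt_3 {A : Type*} (B : Set (Set A)) (X : Type*) [TopologicalSpace X] :
    BACompact B X ↔
      ∀ P : A → Set X,
        (∀ H ∈ B, (⋂ a ∈ H, P a).Nonempty) → (⋂ a, closure (P a)).Nonempty := by
  constructor
  · intro hc P hP
    by_contra h
    rw [Set.not_nonempty_iff_eq_empty] at h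
    have hcov : (⋃ a, (closure (P a))ᶜ) = Set.univ := by
      rw [← Set.compl_iInter, h, Set.compl_empty]
    obtain ⟨H, hH, hHcov⟩ := hc _ (fun a => (isClosed_closure).isOpen_compl) hcov
    obtain ⟨x, hx⟩ := hP H hH
    have : x ∈ ⋃ a ∈ H, (closure (P a))ᶜ := hHcov ▸ Set.mem_univ x
    obtain ⟨a, ha, hxa⟩ := Set.mem_iUnion₂.mp this
    exact hxa (subset_closure (Set.mem_iInter₂.mp hx a ha))
  · intro h O hO hcov
    by_contra hn
    push_neg at hn
    have hP : ∀ H ∈ B, (⋂ a ∈ H, (O a)ᶜ).Nonempty := by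
      intro H hH
      rw [Set.nonempty_iff_ne_empty]
      intro he
      apply hn H hH
      rw [← Set.compl_empty_iff, ← he, Set.compl_iUnion₂]
    obtain ⟨x, hx⟩ := h _ hP
    have : x ∈ ⋃ a, O a := hcov ▸ Set.mem_univ x
    obtain ⟨a, hxa⟩ := Set.mem_iUnion.mp this
    have := Set.mem_iInter.mp hx a
    rw [(hO a).isClosed_compl.closure_eq] at this
    exact this hxa
end

section
/- Let A be a set, B ⊆ 𝒫(A), and X a topological space. Then X is [B,A]-compact if and only if for every B-indexed family (x_H)_{H∈B} of points of X one has ⋂_{a∈A} closure({ x_H | H ∈ B and a ∈ H }) ≠ ∅. -/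
theorem stmt_4 {A : Type*} (B : Set (Set A)) (X : Type*) [TopologicalSpace X] :
    BACompact B X ↔
      ∀ x : B → X,
        (⋂ a : A, closure {y : X | ∃ H : B, a ∈ (H : Set A) ∧ x H = y}).Nonempty := by
  constructor
  · intro hc x
    by_contra hemp
    rw [Set.not_nonempty_iff_eq_empty] at hemp
    set S : A → Set X := fun a => {y : X | ∃ H : B, a ∈ (H : Set A) ∧ x H = y} with hS
    have hcov : (⋃ a, (closure (S a))ᶜ) = Set.univ := by
      rw [← Set.compl_iInter, hemp, Set.compl_empty]
    obtain ⟨H, hHB, hH⟩ := hc (fun a => (closure (S a))ᶜ)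
      (fun a => (isClosed_closure).isOpen_compl) hcov
    have : x ⟨H, hHB⟩ ∈ (⋃ a ∈ H, (closure (S a))ᶜ) := hH ▸ Set.mem_univ _
    obtain ⟨a, haH, hmem⟩ := Set.mem_iUnion₂.1 this
    exact hmem (subset_closure ⟨⟨H, hHB⟩, haH, rfl⟩)
  · intro h O hO hcov
    by_contra hno
    push_neg at hno
    have hx : ∀ H : B, ∃ z : X, z ∉ ⋃ a ∈ (H : Set A), O a := by
      intro ⟨H, hHB⟩
      have := hno H hHB
      rcases Set.ne_univ_iff_exists_notMem _ |>.1 this with ⟨z, hz⟩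
      exact ⟨z, hz⟩
    choose x hxspec using hx
    obtain ⟨z, hz⟩ := h x
    have hz' : ∀ a, z ∈ closure {y : X | ∃ H : B, a ∈ (H : Set A) ∧ x H = y} := by
      simpa [Set.mem_iInter] using hz
    have : z ∈ ⋃ a, O a := hcov ▸ Set.mem_univ _
    obtain ⟨a, haz⟩ := Set.mem_iUnion.1 this
    obtain ⟨y, hyO, ⟨H, haH, hxy⟩⟩ :=
      (mem_closure_iff.1 (hz' a)) (O a) (hO a) haz
    exact hxspec H (Set.mem_biUnion haH (hxy ▸ hyO))
end

section
/- Let A be a set, B ⊆ 𝒫(A), and X a topological space. Then X is [B,A]-compact if and only if for every B-indexed family (O_H)_{H∈B} of open proper subsets of X, if for every a ∈ A we put Q_a = interior(⋂{ O_H | H ∈ B and a ∈ H }), then the family (Q_a)_{a∈A} is not a cover of X, i.e. ⋃_{a∈A} Q_a ≠ X. -/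
theorem stmt_5 {A : Type*} (B : Set (Set A)) (X : Type*) [TopologicalSpace X] :
    BACompact B X ↔
      ∀ O : B → Set X, (∀ H, IsOpen (O H)) → (∀ H, O H ≠ Set.univ) →
        (⋃ a : A, interior (⋂ H ∈ {H : B | a ∈ (H : Set A)}, O H)) ≠ Set.univ := by
  constructor
  · intro hc O hop hne hcov
    obtain ⟨H, hHB, hH⟩ := hc (fun a => interior (⋂ H ∈ {H : B | a ∈ (H : Set A)}, O H))
      (fun a => isOpen_interior) hcov
    apply hne ⟨H, hHB⟩
    apply Set.eq_univ_of_univ_subset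
    rw [← hH]
    refine Set.iUnion₂_subset fun a ha => ?_
    refine interior_subset.trans ?_
    exact Set.biInter_subset_of_mem (by exact ha : (⟨H, hHB⟩ : B) ∈ {H : B | a ∈ (H : Set A)})
  · intro h O hop hcov
    by_contra hno
    push_neg at hno
    apply h (fun H => ⋃ a ∈ (H : Set A), O a)
      (fun H => isOpen_biUnion fun a _ => hop a) (fun H => hno H H.2)
    apply Set.eq_univ_of_univ_subset
    rw [← hcov]
    refine Set.iUnion_subset fun a => ?_
    refine Set.subset_iUnion_of_subset a ?_
    refine (hop a).subset_interior_iff.mpr ?_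
    exact Set.subset_iInter₂ fun H ha => Set.subset_biUnion_of_mem ha
end

section
/- Let α and β be ordinals and let 𝒫_β(α) denote the set of all subsets of α having order type < β. Then for a topological space X the following are equivalent: (1) X is [𝒫_β(α), α]-compact; (2) for every family (x_z), indexed by z ∈ 𝒫_β(α), of points of X, if for each γ < α we put P_γ = { x_z | z ∈ 𝒫_β(α) and γ ∈ z }, then ⋂_{γ<α} closure(P_γ) ≠ ∅. -/
/-- The order type of a subset of a well-ordered type, with the inherited order. -/
noncomputable def orderTypeSet {σ : Type u} [LinearOrder σ] [WellFoundedLT σ]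
    (z : Set σ) : Ordinal.{u} :=
  @Ordinal.type z (Subrel (· < ·) (· ∈ z)) (by infer_instance)

/-- `𝒫_β(α)`: the set of all subsets of (the canonical type of order type) `α`
having order type `< β`. -/
noncomputable def Pbeta (α β : Ordinal) : Set (Set α.ToType) :=
  {z : Set α.ToType | orderTypeSet z < β}

/-! If the sets `closure P_a` had empty intersection, their complements would be an open cover
with a subcover indexed by some `H ∈ B`, which misses the point `x H ∈ P_a` for `a ∈ H`.
Conversely, an open cover `O` without such a subcover yields points `x H ∉ ⋃ a ∈ H, O a`;
a point `y` of `⋂ a, closure P_a` lies in some `O a`, and this neighbourhood of `y` meets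
`P_a` in some `x H` with `a ∈ H`. -/

section

variable {A X : Type*} [TopologicalSpace X] {B : Set (Set A)}

theorem BACompact.iInter_closure_nonempty (hX : BACompact B X) (x : B → X) :
    (⋂ a : A, closure {y : X | ∃ z : B, a ∈ (z : Set A) ∧ x z = y}).Nonempty := by
  by_contra hempty
  rw [Set.not_nonempty_iff_eq_empty] at hempty
  obtain ⟨H, hH, hcover⟩ := hX
    (fun a => (closure {y : X | ∃ z : B, a ∈ (z : Set A) ∧ x z = y})ᶜ)
    (fun _ => isClosed_closure.isOpen_compl)
    (by rw [← Set.compl_iInter, hempty, Set.compl_empty])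
  have hxH : x ⟨H, hH⟩ ∈ ⋃ a ∈ H, (closure {y : X | ∃ z : B, a ∈ (z : Set A) ∧ x z = y})ᶜ :=
    hcover ▸ Set.mem_univ _
  obtain ⟨a, haH, hx_notMem⟩ := Set.mem_iUnion₂.mp hxH
  exact hx_notMem (subset_closure ⟨⟨H, hH⟩, haH, rfl⟩)

theorem bACompact_of_iInter_closure_nonempty
    (h : ∀ x : B → X, (⋂ a : A, closure {y : X | ∃ z : B, a ∈ (z : Set A) ∧ x z = y}).Nonempty) :
    BACompact B X := by
  intro O hO hcover
  by_contra! hno_subcover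
  have hmiss (z : B) : ∃ p : X, p ∉ ⋃ a ∈ (z : Set A), O a :=
    (Set.ne_univ_iff_exists_notMem _).mp (hno_subcover z z.2)
  choose x hx using hmiss
  obtain ⟨y, hy⟩ := h x
  obtain ⟨a, hya⟩ := Set.mem_iUnion.mp (hcover ▸ Set.mem_univ y)
  obtain ⟨w, hwO, z, haz, rfl⟩ := mem_closure_iff.mp (Set.mem_iInter.mp hy a) (O a) (hO a) hya
  exact hx z (Set.mem_biUnion haz hwO)

theorem bACompact_iff_iInter_closure_nonempty :
    BACompact B X ↔ ∀ x : B → X,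
      (⋂ a : A, closure {y : X | ∃ z : B, a ∈ (z : Set A) ∧ x z = y}).Nonempty :=
  ⟨BACompact.iInter_closure_nonempty, bACompact_of_iInter_closure_nonempty⟩

end

theorem stmt_6 (α β : Ordinal) (X : Type*) [TopologicalSpace X] :
    BACompact (Pbeta α β) X ↔
      ∀ x : Pbeta α β → X,
        (⋂ γ : α.ToType,
          closure {y : X | ∃ z : Pbeta α β, γ ∈ (z : Set α.ToType) ∧ x z = y}).Nonempty :=
  bACompact_iff_iInter_closure_nonempty
end

section
/- Let D be an ultrafilter over a set I. A topological space X is D-compact if and only if for every family (O_Z)_{Z∈D} of open subsets of X with ⋃_{Z∈D} O_Z = X, there is some i ∈ I such that ⋃{ O_Z | Z ∈ D and i ∈ Z } = X. -/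
/-- `(x_i)_{i∈I}` `D`-converges to `p` if `{i | x i ∈ U} ∈ D` for every neighborhood `U` of `p`. -/
def DConverges {I X : Type*} [TopologicalSpace X] (D : Ultrafilter I) (x : I → X)
    (p : X) : Prop :=
  ∀ U ∈ nhds p, {i | x i ∈ U} ∈ D

/-- `X` is `D`-compact if every `I`-indexed sequence `D`-converges to some point. -/
def DCompact {I : Type*} (D : Ultrafilter I) (X : Type*) [TopologicalSpace X] : Prop :=
  ∀ x : I → X, ∃ p : X, DConverges D x p

theorem stmt_7 {I : Type*} (D : Ultrafilter I) (X : Type*) [TopologicalSpace X] :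
    DCompact D X ↔
      ∀ O : Set I → Set X, (∀ Z ∈ D, IsOpen (O Z)) →
        (⋃ Z ∈ {Z : Set I | Z ∈ D}, O Z) = Set.univ →
        ∃ i : I, (⋃ Z ∈ {Z : Set I | Z ∈ D ∧ i ∈ Z}, O Z) = Set.univ := by
  constructor
  · intro hc O hopen hcover
    by_contra h
    push_neg at h
    have hx : ∀ i, ∃ y : X, y ∉ ⋃ Z ∈ {Z : Set I | Z ∈ D ∧ i ∈ Z}, O Z := fun i =>
      (Set.ne_univ_iff_exists_notMem _).mp (h i)
    choose x hxi using hx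
    obtain ⟨p, hp⟩ := hc x
    have hpU : p ∈ ⋃ Z ∈ {Z : Set I | Z ∈ D}, O Z := hcover ▸ Set.mem_univ p
    simp only [Set.mem_iUnion, Set.mem_setOf_eq] at hpU
    obtain ⟨W, hW, hpW⟩ := hpU
    have hmem : {i | x i ∈ O W} ∈ D := hp _ ((hopen W hW).mem_nhds hpW)
    have hint : {i | x i ∈ O W} ∩ W ∈ (D : Filter I) := Filter.inter_mem hmem hW
    obtain ⟨i, hi1, hi2⟩ := Filter.nonempty_of_mem hint
    exact hxi i (Set.mem_biUnion ⟨hW, hi2⟩ hi1)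
  · intro h x
    by_contra hnc
    push_neg at hnc
    have key : ∀ p : X, ∃ U : Set X, IsOpen U ∧ p ∈ U ∧ {i | x i ∉ U} ∈ D := by
      intro p
      have hp := hnc p
      unfold DConverges at hp
      push_neg at hp
      obtain ⟨U, hU, hUD⟩ := hp
      obtain ⟨V, hVU, hVopen, hpV⟩ := mem_nhds_iff.mp hU
      refine ⟨V, hVopen, hpV, ?_⟩
      have : {i | x i ∈ V} ∉ D := fun hmem =>
        hUD (Filter.mem_of_superset hmem fun i hi => hVU hi)
      exact (Ultrafilter.compl_mem_iff_notMem).mpr this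
    choose U hUo hpU hZ using key
    set O : Set I → Set X := fun Z => ⋃ p ∈ {p | {i | x i ∉ U p} = Z}, U p with hO
    have hopen : ∀ Z ∈ D, IsOpen (O Z) := fun Z _ =>
      isOpen_biUnion fun p _ => hUo p
    have hcover : (⋃ Z ∈ {Z : Set I | Z ∈ D}, O Z) = Set.univ := by
      ext y
      simp only [Set.mem_iUnion, Set.mem_setOf_eq, Set.mem_univ, iff_true]
      exact ⟨{i | x i ∉ U y}, hZ y, Set.mem_biUnion rfl (hpU y)⟩
    obtain ⟨i, hi⟩ := h O hopen hcover
    have hxi : x i ∈ ⋃ Z ∈ {Z : Set I | Z ∈ D ∧ i ∈ Z}, O Z := hi ▸ Set.mem_univ _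
    simp only [Set.mem_iUnion, Set.mem_setOf_eq, hO] at hxi
    obtain ⟨Z, ⟨hZD, hiZ⟩, p, hpZ, hxp⟩ := hxi
    rw [← hpZ] at hiZ
    exact hiZ hxp
end

section
/- For a T1 topological space X the following conditions are equivalent: (1) X is not countably compact; (2) for every countable nonempty set A, X is not [𝒫(A)∖{A}, A]-compact; (3) there exist a countably infinite set A and a family B ⊆ 𝒫(A) containing all finite subsets of A such that X is not [B,A]-compact. -/
/-- `X` is countably compact if every countable open cover has a finite subcover. -/
def CountablyCompact (X : Type*) [TopologicalSpace X] : Prop :=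
  ∀ 𝒰 : Set (Set X), 𝒰.Countable → (∀ U ∈ 𝒰, IsOpen U) → ⋃₀ 𝒰 = Set.univ →
    ∃ 𝒱 ⊆ 𝒰, 𝒱.Finite ∧ ⋃₀ 𝒱 = Set.univ

/-!
If `X` is not countably compact, pick a countable open cover `U` with no finite subcover and
points `x n ∉ U 0 ∪ ⋯ ∪ U (n - 1)`. Each `U m` contains `x n` only for `n ≤ m`, so the singletons
`{x n}` form a locally finite family; in a T₁ space its range `D` is an infinite set all of whose
subsets are closed. Injecting a countable `A` into `D` by `y`, the open sets `(y '' {a}ᶜ)ᶜ` cover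
`X`, and dropping the `a`-th one uncovers `y a`. Conversely, countable compactness hands every
countable cover a finite subcover, which lies in any `B` containing all finite sets.
-/

open Set Function

section
variable {X : Type*} [TopologicalSpace X]

theorem CountablyCompact.exists_finite_subcover {A : Type*} [Countable A]
    (hX : CountablyCompact X) (O : A → Set X) (hO : ∀ a, IsOpen (O a))
    (hcov : ⋃ a, O a = univ) : ∃ H : Set A, H.Finite ∧ ⋃ a ∈ H, O a = univ := by
  obtain ⟨𝒱, h𝒱O, h𝒱fin, h𝒱cov⟩ := hX (range O) (countable_range O)
    (forall_mem_range.2 hO) (by rwa [sUnion_range])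
  rw [← image_univ] at h𝒱O
  obtain ⟨H, -, hHfin, hHcov⟩ :=
    exists_subset_image_finite_and (p := fun 𝒲 => ⋃₀ 𝒲 = univ) |>.1
      ⟨𝒱, h𝒱O, h𝒱fin, h𝒱cov⟩
  exact ⟨H, hHfin, by rwa [sUnion_image] at hHcov⟩

theorem exists_nat_cover_of_not_countablyCompact (hX : ¬ CountablyCompact X) :
    ∃ U : ℕ → Set X, (∀ n, IsOpen (U n)) ∧ ⋃ n, U n = univ ∧
      ∀ s : Finset ℕ, ⋃ n ∈ s, U n ≠ univ := by
  contrapose! hX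
  intro 𝒰 h𝒰 h𝒰open h𝒰cov
  rcases 𝒰.eq_empty_or_nonempty with rfl | h𝒰ne
  · exact ⟨∅, empty_subset _, finite_empty, h𝒰cov⟩
  obtain ⟨U, rfl⟩ := h𝒰.exists_eq_range h𝒰ne
  obtain ⟨s, hs⟩ := hX U (fun n => h𝒰open _ (mem_range_self n)) (by rwa [← sUnion_range])
  exact ⟨U '' s, image_subset_range _ _, s.finite_toSet.image U, by rwa [sUnion_image]⟩

theorem exists_locallyFinite_singleton_of_not_countablyCompact (hX : ¬ CountablyCompact X) :
    ∃ x : ℕ → X, LocallyFinite fun n => ({x n} : Set X) := by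
  obtain ⟨U, hUopen, hUcov, hUfin⟩ := exists_nat_cover_of_not_countablyCompact hX
  choose x hx using fun n => (ne_univ_iff_exists_notMem _).1 (hUfin (Finset.range n))
  refine ⟨x, fun z => ?_⟩
  obtain ⟨m, hzm⟩ := mem_iUnion.1 (hUcov.symm ▸ mem_univ z : z ∈ ⋃ n, U n)
  refine ⟨U m, (hUopen m).mem_nhds hzm, (finite_Iic m).subset fun n hn => ?_⟩
  by_contra hmn
  obtain ⟨_, rfl, hxn⟩ := hn
  exact hx n (mem_biUnion (Finset.mem_range.2 (not_le.1 hmn)) hxn)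

variable {ι : Type*} {x : ι → X}

theorem LocallyFinite.finite_preimage_singleton (hx : LocallyFinite fun i => ({x i} : Set X))
    (z : X) : (x ⁻¹' {z}).Finite := by
  obtain ⟨t, hzt, ht⟩ := hx z
  exact ht.subset fun i (hi : x i = z) => ⟨z, hi.symm, mem_of_mem_nhds hzt⟩

theorem LocallyFinite.infinite_range [Infinite ι]
    (hx : LocallyFinite fun i => ({x i} : Set X)) : (range x).Infinite := fun hfin =>
  infinite_univ (by simpa using hfin.preimage' fun z _ => hx.finite_preimage_singleton z)

theorem LocallyFinite.isClosed_of_subset_range [T1Space X]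
    (hx : LocallyFinite fun i => ({x i} : Set X)) {t : Set X} (ht : t ⊆ range x) :
    IsClosed t := by
  have hunion : ⋃ i, ({x i} ∩ t) = t := by
    rw [← iUnion_inter, ← range_eq_iUnion, inter_eq_right.2 ht]
  rw [← hunion]
  exact (hx.subset fun i => inter_subset_left).isClosed_iUnion
    fun i => (subsingleton_singleton.anti inter_subset_left).isClosed

theorem CountablyCompact.baCompact {A : Type*} [Countable A] {B : Set (Set A)}
    (hB : ∀ H : Set A, H.Finite → H ∈ B) (hX : CountablyCompact X) : BACompact B X :=
  fun O hO hcov =>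
    let ⟨H, hHfin, hHcov⟩ := hX.exists_finite_subcover O hO hcov
    ⟨H, hB H hHfin, hHcov⟩

theorem not_baCompact_of_injective {A : Type*} [Nonempty A] {y : A → X} (hy : Injective y)
    (hclosed : ∀ s, IsClosed (y '' s)) : ¬ BACompact {H : Set A | H ≠ univ} X := by
  intro hBA
  set O : A → Set X := fun a => (y '' {a}ᶜ)ᶜ
  have hyO : ∀ a b, y a ∈ O b ↔ b = a := by simp [O, hy.eq_iff, eq_comm]
  have hcov : ⋃ a, O a = univ := eq_univ_of_forall fun z => by
    by_cases hz : z ∈ range y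
    · obtain ⟨a, rfl⟩ := hz
      exact mem_iUnion.2 ⟨a, (hyO a a).2 rfl⟩
    · exact mem_iUnion.2 ⟨Classical.arbitrary A, fun h => hz (image_subset_range _ _ h)⟩
  obtain ⟨H, hH, hHcov⟩ := hBA O (fun a => (hclosed _).isOpen_compl) hcov
  obtain ⟨a, haH⟩ := (ne_univ_iff_exists_notMem H).1 hH
  obtain ⟨b, hbH, hab⟩ := mem_iUnion₂.1 (hHcov.symm ▸ mem_univ (y a))
  exact haH ((hyO a b).1 hab ▸ hbH)

theorem not_baCompact_of_not_countablyCompact [T1Space X] (hX : ¬ CountablyCompact X)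
    (A : Type*) [Countable A] [Nonempty A] : ¬ BACompact {H : Set A | H ≠ univ} X := by
  obtain ⟨x, hx⟩ := exists_locallyFinite_singleton_of_not_countablyCompact hX
  obtain ⟨f, hf⟩ := exists_injective_nat A
  let e := hx.infinite_range.natEmbedding
  refine not_baCompact_of_injective (y := fun a => (e (f a) : X))
    ((Subtype.val_injective.comp e.injective).comp hf) fun s => hx.isClosed_of_subset_range ?_
  rintro _ ⟨a, -, rfl⟩
  exact (e (f a)).2

end

theorem stmt_8 (X : Type*) [TopologicalSpace X] [T1Space X] :
    (¬ CountablyCompact X ↔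
      ∀ (A : Type), Countable A → Nonempty A →
        ¬ BACompact {H : Set A | H ≠ Set.univ} X) ∧
    (¬ CountablyCompact X ↔
      ∃ (A : Type), Countable A ∧ Infinite A ∧
        ∃ B : Set (Set A), (∀ H : Set A, H.Finite → H ∈ B) ∧ ¬ BACompact B X) := by
  have h12 : ¬ CountablyCompact X → ∀ (A : Type), Countable A → Nonempty A →
      ¬ BACompact {H : Set A | H ≠ univ} X :=
    fun hX A _ _ => not_baCompact_of_not_countablyCompact hX A
  have h23 : (∀ (A : Type), Countable A → Nonempty A → ¬ BACompact {H : Set A | H ≠ univ} X) →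
      ∃ (A : Type), Countable A ∧ Infinite A ∧
        ∃ B : Set (Set A), (∀ H : Set A, H.Finite → H ∈ B) ∧ ¬ BACompact B X :=
    fun h => ⟨ℕ, inferInstance, inferInstance, {H | H ≠ univ},
      fun _ hH he => infinite_univ (he ▸ hH), h ℕ inferInstance ⟨0⟩⟩
  have h31 : (∃ (A : Type), Countable A ∧ Infinite A ∧
      ∃ B : Set (Set A), (∀ H : Set A, H.Finite → H ∈ B) ∧ ¬ BACompact B X) →
      ¬ CountablyCompact X := by
    rintro ⟨A, _, -, B, hB, hnot⟩ hX
    exact hnot (hX.baCompact hB)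
  exact ⟨⟨h12, h31 ∘ h23⟩, ⟨h23 ∘ h12, h31⟩⟩
end

section
/- Let X be a topological space, A a set, B ⊆ 𝒫(A), and put I = B and E = { Z ⊆ B | for every a ∈ A there is H ∈ Z with a ∈ H } = { Z ⊆ B | ⋃Z = A }. Then X is [B,A]-compact if and only if X satisfies the E-accumulation property (for I-indexed sequences, I = B). -/
/-- `p` is an `E`-accumulation point of `(x_i)_{i∈I}` if `{i | x i ∈ U} ∈ E` for
every open neighborhood `U` of `p`. -/
def IsEAccPt {I X : Type*} [TopologicalSpace X] (E : Set (Set I)) (x : I → X)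
    (p : X) : Prop :=
  ∀ U : Set X, IsOpen U → p ∈ U → {i | x i ∈ U} ∈ E

/-- `X` satisfies the `E`-accumulation property if every `I`-indexed sequence has an
`E`-accumulation point. -/
def EAccProperty {I : Type*} (E : Set (Set I)) (X : Type*) [TopologicalSpace X] : Prop :=
  ∀ x : I → X, ∃ p : X, IsEAccPt E x p

theorem stmt_9 {A : Type*} (B : Set (Set A)) (X : Type*) [TopologicalSpace X] :
    BACompact B X ↔
      EAccProperty {Z : Set ↥B | ∀ a : A, ∃ H ∈ Z, a ∈ (H : Set A)} X := by
  constructor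
  · intro hc x
    by_contra hn
    push_neg at hn
    simp only [IsEAccPt, Set.mem_setOf_eq] at hn
    push_neg at hn
    -- hn : ∀ p, ∃ U, IsOpen U ∧ p ∈ U ∧ ∃ a, ∀ H ∈ {i | x i ∈ U}, a ∉ H
    choose U hUo hpU a ha using hn
    set O : A → Set X := fun b => ⋃ p : X, ⋃ _ : a p = b, U p with hO
    obtain ⟨H, hHB, hHcov⟩ := hc O
      (fun b => isOpen_iUnion fun p => isOpen_iUnion fun _ => hUo p)
      (by
        ext y; simp only [Set.mem_univ, iff_true, Set.mem_iUnion, hO]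
        exact ⟨a y, y, rfl, hpU y⟩)
    have hy : x ⟨H, hHB⟩ ∈ ⋃ b ∈ H, O b := hHcov ▸ Set.mem_univ _
    simp only [Set.mem_iUnion, hO] at hy
    obtain ⟨b, hbH, p, rfl, hxU⟩ := hy
    exact ha p ⟨H, hHB⟩ hxU hbH
  · intro h O hOo hcov
    by_contra hn
    push_neg at hn
    have h1 : ∀ H : ↥B, ∃ y : X, y ∉ ⋃ b ∈ (H : Set A), O b := by
      intro H
      have := hn H H.2
      rcases Set.ne_univ_iff_exists_notMem _ |>.mp this with ⟨y, hy⟩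
      exact ⟨y, hy⟩
    choose x hx using h1
    obtain ⟨p, hp⟩ := h x
    have hpmem : p ∈ ⋃ b, O b := hcov ▸ Set.mem_univ _
    obtain ⟨b, hb⟩ := Set.mem_iUnion.mp hpmem
    have hZ := hp (O b) (hOo b) hb
    obtain ⟨H, hH, hbH⟩ := hZ b
    exact hx H (Set.mem_biUnion hbH hH)
end

section
/- Let X be a topological space, I a set, A ⊆ 𝒫(I), and let E = A⁺. Then X satisfies the E-accumulation property if and only if for every family (O_a)_{a∈A} of open subsets of X with ⋃_{a∈A} O_a = X, there is i ∈ I such that ⋃{ O_a | a ∈ A and i ∈ a } = X. -/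
/-- `A⁺ = { e ⊆ I | e ∩ a ≠ ∅ for every a ∈ A }`. -/
def SetPlus {I : Type*} (A : Set (Set I)) : Set (Set I) :=
  {e : Set I | ∀ a ∈ A, (e ∩ a).Nonempty}

theorem stmt_10 {I : Type*} (A : Set (Set I)) (X : Type*) [TopologicalSpace X] :
    EAccProperty (SetPlus A) X ↔
      ∀ O : Set I → Set X, (∀ a ∈ A, IsOpen (O a)) →
        (⋃ a ∈ A, O a) = Set.univ →
        ∃ i : I, (⋃ a ∈ {a ∈ A | i ∈ a}, O a) = Set.univ := by
  constructor
  · intro h O hO hcov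
    by_contra hno
    push_neg at hno
    have hx : ∀ i : I, ∃ y : X, y ∉ ⋃ a ∈ {a ∈ A | i ∈ a}, O a := by
      intro i
      exact (Set.ne_univ_iff_exists_notMem _).mp (hno i)
    choose x hx using hx
    obtain ⟨p, hp⟩ := h x
    have hpU : p ∈ ⋃ a ∈ A, O a := hcov ▸ Set.mem_univ p
    rcases Set.mem_iUnion₂.mp hpU with ⟨a, ha, hpa⟩
    obtain ⟨i, hxi, hia⟩ := hp (O a) (hO a ha) hpa a ha
    exact hx i (Set.mem_iUnion₂.mpr ⟨a, ⟨ha, hia⟩, hxi⟩)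
  · intro h x
    by_contra hno
    push_neg at hno
    have key : ∀ p : X, ∃ U : Set X, IsOpen U ∧ p ∈ U ∧
        ∃ a ∈ A, {i | x i ∈ U} ∩ a = ∅ := by
      intro p
      have := hno p
      simp only [IsEAccPt, not_forall] at this
      obtain ⟨U, hU, hpU, hmem⟩ := this
      refine ⟨U, hU, hpU, ?_⟩
      simp only [SetPlus, Set.mem_setOf_eq, not_forall] at hmem
      obtain ⟨a, ha, hne⟩ := hmem
      exact ⟨a, ha, Set.not_nonempty_iff_eq_empty.mp hne⟩
    choose U hUopen hpU a haA hdisj using key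
    set O : Set I → Set X := fun b => ⋃ p ∈ {p : X | a p = b}, U p with hOdef
    have hOopen : ∀ b ∈ A, IsOpen (O b) := fun b _ =>
      isOpen_biUnion fun p _ => hUopen p
    have hcov : (⋃ b ∈ A, O b) = Set.univ := by
      ext q; simp only [Set.mem_univ, iff_true]
      exact Set.mem_iUnion₂.mpr ⟨a q, haA q, Set.mem_iUnion₂.mpr ⟨q, rfl, hpU q⟩⟩
    obtain ⟨i, hi⟩ := h O hOopen hcov
    have hxi : x i ∈ ⋃ b ∈ {b ∈ A | i ∈ b}, O b := hi ▸ Set.mem_univ _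
    rcases Set.mem_iUnion₂.mp hxi with ⟨b, ⟨hbA, hib⟩, hxib⟩
    rcases Set.mem_iUnion₂.mp hxib with ⟨p, hp, hxU⟩
    have hmem : i ∈ {j | x j ∈ U p} ∩ a p := ⟨hxU, by rw [hp]; exact hib⟩
    rw [hdisj p] at hmem
    exact hmem
end

section
/- Let X be a topological space, M a set of ultrafilters over a set I, and let F = ⋂_{D∈M} D. Then X is weakly M-compact if and only if for every family (O_Z)_{Z∈F} of open subsets of X with ⋃_{Z∈F} O_Z = X, there is some i ∈ I such that ⋃{ O_Z | Z ∈ F and i ∈ Z } = X. -/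
/-- `X` is weakly `M`-compact, for `M` a set of ultrafilters over `I`, if every
`I`-indexed sequence of points of `X` has a point `p` such that every neighborhood `U`
of `p` satisfies `{i | x i ∈ U} ∈ D` for some `D ∈ M`. -/
def WeaklyMCompact {I : Type*} (M : Set (Ultrafilter I)) (X : Type*)
    [TopologicalSpace X] : Prop :=
  ∀ x : I → X, ∃ p : X, ∀ U ∈ nhds p, ∃ D ∈ M, {i | x i ∈ U} ∈ D

theorem stmt_12 {I : Type*} (M : Set (Ultrafilter I)) (X : Type*) [TopologicalSpace X] :
    WeaklyMCompact M X ↔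
      ∀ O : Set I → Set X,
        (∀ Z ∈ {Z : Set I | ∀ D ∈ M, Z ∈ D}, IsOpen (O Z)) →
        (⋃ Z ∈ {Z : Set I | ∀ D ∈ M, Z ∈ D}, O Z) = Set.univ →
        ∃ i : I, (⋃ Z ∈ {Z : Set I | (∀ D ∈ M, Z ∈ D) ∧ i ∈ Z}, O Z) = Set.univ := by
  constructor
  · intro h O hopen hcov
    by_contra hno
    push_neg at hno
    -- for each i choose a point not covered
    have hx : ∀ i : I, ∃ q : X, q ∉ ⋃ Z ∈ {Z : Set I | (∀ D ∈ M, Z ∈ D) ∧ i ∈ Z}, O Z := by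
      intro i
      have := hno i
      rw [← Set.ne_univ_iff_exists_notMem]
      exact this
    choose x hxmem using hx
    obtain ⟨p, hp⟩ := h x
    have hpU : p ∈ ⋃ Z ∈ {Z : Set I | ∀ D ∈ M, Z ∈ D}, O Z := hcov ▸ Set.mem_univ p
    simp only [Set.mem_iUnion, Set.mem_setOf_eq] at hpU
    obtain ⟨Z, hZ, hpZ⟩ := hpU
    obtain ⟨D, hD, hDx⟩ := hp (O Z) ((hopen Z hZ).mem_nhds hpZ)
    have hZD : Z ∈ D := hZ D hD
    obtain ⟨i, hiZ, hix⟩ := Filter.nonempty_of_mem (D.toFilter.inter_mem hZD hDx)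
    have : x i ∈ ⋃ Z' ∈ {Z' : Set I | (∀ D ∈ M, Z' ∈ D) ∧ i ∈ Z'}, O Z' := by
      simp only [Set.mem_iUnion, Set.mem_setOf_eq]
      exact ⟨Z, ⟨hZ, hiZ⟩, hix⟩
    exact hxmem i this
  · intro h x
    by_contra hno
    push_neg at hno
    -- for each p choose an open nbhd missing every D
    have hU : ∀ p : X, ∃ U : Set X, IsOpen U ∧ p ∈ U ∧ ∀ D ∈ M, {i | x i ∈ U} ∉ D := by
      intro p
      obtain ⟨U, hUnhds, hUD⟩ := hno p
      obtain ⟨V, hVU, hVopen, hpV⟩ := mem_nhds_iff.mp hUnhds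
      refine ⟨V, hVopen, hpV, fun D hD hVD => hUD D hD ?_⟩
      exact Filter.mem_of_superset hVD (fun i hi => hVU hi)
    choose U hUopen hUmem hUD using hU
    set O : Set I → Set X := fun Z => ⋃₀ {V | IsOpen V ∧ ∀ i ∈ Z, x i ∉ V} with hO
    have hOopen : ∀ Z ∈ {Z : Set I | ∀ D ∈ M, Z ∈ D}, IsOpen (O Z) :=
      fun Z _ => isOpen_sUnion fun V hV => hV.1
    have hcov : (⋃ Z ∈ {Z : Set I | ∀ D ∈ M, Z ∈ D}, O Z) = Set.univ := by
      apply Set.eq_univ_of_forall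
      intro p
      simp only [Set.mem_iUnion, Set.mem_setOf_eq]
      refine ⟨{i | x i ∉ U p}, fun D hD => ?_, ?_⟩
      · have := hUD p D hD
        rwa [← Ultrafilter.compl_mem_iff_notMem] at this
      · exact ⟨U p, ⟨hUopen p, fun i hi => hi⟩, hUmem p⟩
    obtain ⟨i, hi⟩ := h O hOopen hcov
    have hxi : x i ∈ ⋃ Z ∈ {Z : Set I | (∀ D ∈ M, Z ∈ D) ∧ i ∈ Z}, O Z :=
      hi ▸ Set.mem_univ (x i)
    simp only [Set.mem_iUnion, Set.mem_setOf_eq] at hxi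
    obtain ⟨Z, ⟨_, hiZ⟩, hxO⟩ := hxi
    obtain ⟨V, ⟨_, hVZ⟩, hxV⟩ := hxO
    exact hVZ i hiZ hxV
end

section
/- Let X be a topological space, x ∈ X, I a set, (F_i)_{i∈I} a sequence of subsets of X, A ⊆ 𝒫(I), and E = A⁺. For each a ∈ A put C_a = closure(⋃_{i∈a} F_i). Then x is an E-limit point of (F_i)_{i∈I} if and only if x ∈ ⋂_{a∈A} C_a. -/
/-- `p` is an `E`-limit point of a sequence `(F_i)_{i∈I}` of subsets of `X` if
`{i | F i ∩ U ≠ ∅} ∈ E` for every open neighborhood `U` of `p`. -/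
def IsELimPt {I X : Type*} [TopologicalSpace X] (E : Set (Set I)) (F : I → Set X)
    (p : X) : Prop :=
  ∀ U : Set X, IsOpen U → p ∈ U → {i | (F i ∩ U).Nonempty} ∈ E

theorem stmt_13 {I X : Type*} [TopologicalSpace X] (p : X) (F : I → Set X)
    (A : Set (Set I)) :
    IsELimPt (SetPlus A) F p ↔ p ∈ ⋂ a ∈ A, closure (⋃ i ∈ a, F i) := by
  simp only [Set.mem_iInter, mem_closure_iff]
  constructor
  · intro h a ha U hU hpU
    obtain ⟨i, hiE, hia⟩ := h U hU hpU a ha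
    obtain ⟨y, hyF, hyU⟩ := hiE
    exact ⟨y, hyU, Set.mem_iUnion₂.2 ⟨i, hia, hyF⟩⟩
  · intro h U hU hpU a ha
    obtain ⟨y, hyU, hy⟩ := h a ha U hU hpU
    obtain ⟨i, hia, hyF⟩ := Set.mem_iUnion₂.1 hy
    exact ⟨i, ⟨y, hyF, hyU⟩, hia⟩
end

section
/- Let X be a topological space, 𝓕 a family of subsets of X, and D an ultrafilter over a set I. Then X is 𝓕-D-compact if and only if for every family (O_Z)_{Z∈D} of open subsets of X with ⋃_{Z∈D} O_Z = X, there is some i ∈ I such that for every F ∈ 𝓕 one has F ∩ ⋃{ O_Z | Z ∈ D and i ∈ Z } ≠ ∅. -/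
/-- `X` is `𝓕`-`D`-compact if every `I`-indexed sequence of members of `𝓕` has a
`D`-limit point in `X`. -/
def FDCompact {I X : Type*} [TopologicalSpace X] (𝓕 : Set (Set X))
    (D : Ultrafilter I) : Prop :=
  ∀ F : I → Set X, (∀ i, F i ∈ 𝓕) → ∃ p : X, IsELimPt {Z : Set I | Z ∈ D} F p

theorem stmt_14 {I X : Type*} [TopologicalSpace X] (𝓕 : Set (Set X))
    (D : Ultrafilter I) :
    FDCompact 𝓕 D ↔
      ∀ O : Set I → Set X, (∀ Z ∈ D, IsOpen (O Z)) →
        (⋃ Z ∈ {Z : Set I | Z ∈ D}, O Z) = Set.univ →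
        ∃ i : I, ∀ F ∈ 𝓕, (F ∩ ⋃ Z ∈ {Z : Set I | Z ∈ D ∧ i ∈ Z}, O Z).Nonempty := by
  constructor
  · intro h O hO hcov
    by_contra hc
    push_neg at hc
    choose F hF hFe using hc
    obtain ⟨p, hp⟩ := h F hF
    have hpmem : p ∈ ⋃ Z ∈ {Z : Set I | Z ∈ D}, O Z := by rw [hcov]; trivial
    simp only [Set.mem_iUnion] at hpmem
    obtain ⟨Z, hZ, hpZ⟩ := hpmem
    have hmem : {i | (F i ∩ O Z).Nonempty} ∈ D := hp (O Z) (hO Z hZ) hpZ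
    have hint : {i | (F i ∩ O Z).Nonempty} ∩ Z ∈ (D : Filter I) :=
      Filter.inter_mem hmem hZ
    obtain ⟨i, hi1, hi2⟩ := Filter.nonempty_of_mem hint
    have hsub : O Z ⊆ ⋃ Z' ∈ {Z' : Set I | Z' ∈ D ∧ i ∈ Z'}, O Z' := by
      intro x hx
      simp only [Set.mem_iUnion]
      exact ⟨Z, ⟨hZ, hi2⟩, hx⟩
    obtain ⟨x, hxF, hxO⟩ := hi1
    have : x ∈ F i ∩ ⋃ Z' ∈ {Z' : Set I | Z' ∈ D ∧ i ∈ Z'}, O Z' :=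
      ⟨hxF, hsub hxO⟩
    rw [hFe i] at this
    exact this
  · intro h F hF
    by_contra hc
    push_neg at hc
    have hc' : ∀ p : X, ∃ U, IsOpen U ∧ p ∈ U ∧ {i | (F i ∩ U).Nonempty} ∉ D := by
      intro p
      have := hc p
      unfold IsELimPt at this
      push_neg at this
      exact this
    set O : Set I → Set X := fun Z => ⋃₀ {U | IsOpen U ∧ ∀ i ∈ Z, F i ∩ U = ∅}
      with hOdef
    have hOopen : ∀ Z ∈ D, IsOpen (O Z) := fun Z _ => isOpen_sUnion fun U hU => hU.1
    have hcov : (⋃ Z ∈ {Z : Set I | Z ∈ D}, O Z) = Set.univ := by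
      apply Set.eq_univ_of_forall
      intro p
      obtain ⟨U, hUo, hpU, hUD⟩ := hc' p
      have hZ : {i | F i ∩ U = ∅} ∈ D := by
        have hcompl : {i | (F i ∩ U).Nonempty}ᶜ ∈ D :=
          Ultrafilter.compl_mem_iff_notMem.mpr hUD
        convert hcompl using 1
        ext i
        simp [Set.not_nonempty_iff_eq_empty]
      simp only [Set.mem_iUnion]
      exact ⟨_, hZ, ⟨U, ⟨hUo, fun i hi => hi⟩, hpU⟩⟩
    obtain ⟨i, hi⟩ := h O hOopen hcov
    obtain ⟨x, hxF, hxU⟩ := hi (F i) (hF i)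
    simp only [Set.mem_iUnion] at hxU
    obtain ⟨Z, ⟨hZD, hiZ⟩, hxO⟩ := hxU
    obtain ⟨U, ⟨hUo, hUZ⟩, hxUU⟩ := hxO
    have hempty := hUZ i hiZ
    rw [Set.eq_empty_iff_forall_notMem] at hempty
    exact hempty x ⟨hxF, hxUU⟩
end

section
/- Let A be a set, B ⊆ 𝒫(A), X a topological space, and 𝓕 a family of subsets of X. Then X is 𝓕-[B,A]-compact if and only if for every B-indexed sequence (F_H)_{H∈B} of members of 𝓕 one has ⋂_{a∈A} closure(⋃{ F_H | H ∈ B and a ∈ H }) ≠ ∅. -/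
/-- `X` is `𝓕`-`[B,A]`-compact if for every `A`-indexed open cover `(O_a)` of `X`
there is `H ∈ B` such that every member of `𝓕` meets `⋃ a ∈ H, O a`. -/
def FBACompact {A X : Type*} [TopologicalSpace X] (𝓕 : Set (Set X))
    (B : Set (Set A)) : Prop :=
  ∀ O : A → Set X, (∀ a, IsOpen (O a)) → (⋃ a, O a) = Set.univ →
    ∃ H ∈ B, ∀ F ∈ 𝓕, ∃ a ∈ H, (O a ∩ F).Nonempty

theorem stmt_15 {A X : Type*} [TopologicalSpace X] (𝓕 : Set (Set X))
    (B : Set (Set A)) :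
    FBACompact 𝓕 B ↔
      ∀ F : B → Set X, (∀ H : B, F H ∈ 𝓕) →
        (⋂ a : A, closure (⋃ H ∈ {H : B | a ∈ (H : Set A)}, F H)).Nonempty := by
  constructor
  · intro hc F hF
    by_contra hne
    rw [Set.not_nonempty_iff_eq_empty] at hne
    set O : A → Set X := fun a => (closure (⋃ H ∈ {H : B | a ∈ (H : Set A)}, F H))ᶜ with hO
    have hcov : (⋃ a, O a) = Set.univ := by
      ext x
      simp only [Set.mem_iUnion, Set.mem_univ, iff_true, hO, Set.mem_compl_iff]
      by_contra h
      push_neg at h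
      have : x ∈ ⋂ a : A, closure (⋃ H ∈ {H : B | a ∈ (H : Set A)}, F H) := by
        simpa using h
      rw [hne] at this; exact this
    obtain ⟨H, hHB, hH⟩ := hc O (fun a => (isClosed_closure).isOpen_compl) hcov
    obtain ⟨a, haH, x, hxO, hxF⟩ := hH (F ⟨H, hHB⟩) (hF ⟨H, hHB⟩)
    apply hxO
    apply subset_closure
    exact Set.mem_biUnion (show (⟨H, hHB⟩ : B) ∈ {H : B | a ∈ (H : Set A)} from haH) hxF
  · intro h O hOopen hOcov
    by_contra hne
    push_neg at hne
    choose F hF hFdisj using hne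
    set G : B → Set X := fun H => F H.1 H.2 with hG
    obtain ⟨x, hx⟩ := h G (fun H => hF H.1 H.2)
    have hxa : ∀ a : A, x ∉ O a := by
      intro a hxO
      have hx' : x ∈ closure (⋃ H ∈ {H : B | a ∈ (H : Set A)}, G H) := by
        exact Set.mem_iInter.mp hx a
      have hsub : (⋃ H ∈ {H : B | a ∈ (H : Set A)}, G H) ⊆ (O a)ᶜ := by
        rintro y hy
        simp only [Set.mem_iUnion] at hy
        obtain ⟨H, haH, hyG⟩ := hy
        intro hyO
        have := hFdisj H.1 H.2 a haH
        rw [Set.eq_empty_iff_forall_notMem] at this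
        exact this y ⟨hyO, hyG⟩
      have : x ∈ (O a)ᶜ := by
        have := closure_mono hsub hx'
        rwa [((hOopen a).isClosed_compl).closure_eq] at this
      exact this hxO
    have : x ∈ ⋃ a, O a := hOcov ▸ Set.mem_univ x
    obtain ⟨a, ha⟩ := Set.mem_iUnion.mp this
    exact hxa a ha
end

section
/- Let A be a set, B, G ⊆ 𝒫(A), and X a topological space. Then X is [B,G]-compact if and only if for every B-indexed family (x_H)_{H∈B} of points of X there exists K ∈ G such that ⋂_{a∈K} closure({ x_H | H ∈ B and a ∈ H }) ≠ ∅. -/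
/-- `X` is `[B,G]`-compact if whenever `(O_a)_{a∈A}` is a family of open subsets of `X`
such that `(O_a)_{a∈K}` covers `X` for every `K ∈ G`, there exists `H ∈ B` such that
`(O_a)_{a∈H}` covers `X`. -/
def BGCompact {A : Type*} (B G : Set (Set A)) (X : Type*) [TopologicalSpace X] : Prop :=
  ∀ O : A → Set X, (∀ a, IsOpen (O a)) →
    (∀ K ∈ G, (⋃ a ∈ K, O a) = Set.univ) →
    ∃ H ∈ B, (⋃ a ∈ H, O a) = Set.univ

theorem stmt_16 {A : Type*} (B G : Set (Set A)) (X : Type*) [TopologicalSpace X] :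
    BGCompact B G X ↔
      ∀ x : B → X, ∃ K ∈ G,
        (⋂ a ∈ K, closure {y : X | ∃ H : B, a ∈ (H : Set A) ∧ x H = y}).Nonempty := by
  constructor
  · intro hc x
    by_contra hK
    push_neg at hK
    let S : A → Set X := fun a => {y : X | ∃ H : B, a ∈ (H : Set A) ∧ x H = y}
    obtain ⟨H, hH, hcov⟩ := hc (fun a => (closure (S a))ᶜ)
      (fun a => (isClosed_closure).isOpen_compl)
      (by
        intro K hKG
        have h0 : ⋂ a ∈ K, closure (S a) = ∅ := hK K hKG
        rw [show (⋃ a ∈ K, (closure (S a))ᶜ) = (⋂ a ∈ K, closure (S a))ᶜ by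
          simp [Set.compl_iInter], h0, Set.compl_empty])
    have hx : x ⟨H, hH⟩ ∈ (Set.univ : Set X) := Set.mem_univ _
    rw [← hcov] at hx
    obtain ⟨a, ha, hmem⟩ := Set.mem_iUnion₂.mp hx
    exact hmem (subset_closure ⟨⟨H, hH⟩, ha, rfl⟩)
  · intro h O hop hcov
    by_contra hB
    push_neg at hB
    have hx : ∀ H : B, ∃ p : X, p ∉ ⋃ a ∈ (H : Set A), O a := by
      intro H
      have := hB H H.2
      rcases Set.ne_univ_iff_exists_notMem _ |>.mp this with ⟨p, hp⟩
      exact ⟨p, hp⟩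
    choose x hxp using hx
    obtain ⟨K, hKG, p, hp⟩ := h x
    have hpu : p ∈ (Set.univ : Set X) := Set.mem_univ _
    rw [← hcov K hKG] at hpu
    obtain ⟨a, haK, hpa⟩ := Set.mem_iUnion₂.mp hpu
    have hpc : p ∈ closure {y : X | ∃ H : B, a ∈ (H : Set A) ∧ x H = y} :=
      Set.mem_iInter₂.mp hp a haK
    obtain ⟨q, hqO, H, haH, hq⟩ :=
      mem_closure_iff.mp hpc (O a) (hop a) hpa
    exact hxp H (Set.mem_iUnion₂.mpr ⟨a, haH, hq ▸ hqO⟩)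
end

section
/- A topological space X is sequentially compact if and only if the following holds: for every family (O_a) of open subsets of X indexed by the infinite subsets a of ℕ, if for every infinite Z ⊆ ℕ the subfamily { O_a | a an infinite subset of Z } covers X, then there exists n ∈ ℕ such that { O_a | a an infinite subset of ℕ with n ∈ a } covers X. -/
open Filter Topology Set

theorem stmt_17 (X : Type*) [TopologicalSpace X] :
    SeqCompactSpace X ↔
      ∀ O : Set ℕ → Set X, (∀ a : Set ℕ, a.Infinite → IsOpen (O a)) →
        (∀ Z : Set ℕ, Z.Infinite →
          (⋃ a ∈ {a : Set ℕ | a ⊆ Z ∧ a.Infinite}, O a) = Set.univ) →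
        ∃ n : ℕ, (⋃ a ∈ {a : Set ℕ | a.Infinite ∧ n ∈ a}, O a) = Set.univ := by
  constructor
  · intro hX O hO hcov
    by_contra h
    push_neg at h
    have hy : ∀ n : ℕ, ∃ y : X, y ∉ ⋃ a ∈ {a : Set ℕ | a.Infinite ∧ n ∈ a}, O a := by
      intro n
      exact (Set.ne_univ_iff_exists_notMem _).mp (h n)
    choose y hy using hy
    obtain ⟨p, -, φ, hφ, htend⟩ :=
      (isSeqCompact_univ (X := X)) (fun n => Set.mem_univ (y n))
    have hZ : (Set.range φ).Infinite := Set.infinite_range_of_injective hφ.injective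
    have hp : p ∈ ⋃ a ∈ {a : Set ℕ | a ⊆ Set.range φ ∧ a.Infinite}, O a := by
      rw [hcov _ hZ]; trivial
    simp only [Set.mem_iUnion, Set.mem_setOf_eq] at hp
    obtain ⟨a, ⟨hsub, hainf⟩, hpa⟩ := hp
    have hev : ∀ᶠ k in atTop, y (φ k) ∈ O a :=
      htend.eventually_mem ((hO a hainf).mem_nhds hpa)
    obtain ⟨N, hN⟩ := eventually_atTop.mp hev
    obtain ⟨m, hma, hm⟩ := hainf.exists_gt (φ N)
    obtain ⟨k, rfl⟩ := hsub hma
    have hkN : N ≤ k := hφ.le_iff_le.mp hm.le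
    have hmem := hN k hkN
    have hy' := hy (φ k)
    simp only [Set.mem_iUnion, Set.mem_setOf_eq, not_exists] at hy'
    exact hy' a ⟨hainf, hma⟩ hmem
  · intro H
    refine ⟨?_⟩
    intro x _
    by_contra h
    push_neg at h
    set O : Set ℕ → Set X := fun a => (closure (x '' a))ᶜ with hOdef
    have hO : ∀ a : Set ℕ, a.Infinite → IsOpen (O a) := fun a _ =>
      isClosed_closure.isOpen_compl
    have hcov : ∀ Z : Set ℕ, Z.Infinite →
        (⋃ a ∈ {a : Set ℕ | a ⊆ Z ∧ a.Infinite}, O a) = Set.univ := by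
      intro Z hZ
      rw [Set.eq_univ_iff_forall]
      intro y
      simp only [Set.mem_iUnion, Set.mem_setOf_eq]
      by_contra hc
      push_neg at hc
      -- every neighborhood U of y misses only finitely many x m, m ∈ Z
      have hfin : ∀ U ∈ 𝓝 y, {m | m ∈ Z ∧ x m ∉ U}.Finite := by
        intro U hU
        by_contra hinf
        have hinf' : ({m | m ∈ Z ∧ x m ∉ U}).Infinite := hinf
        have hmem := hc _ ⟨fun m hm => hm.1, hinf'⟩
        simp only [hOdef, Set.mem_compl_iff, not_not] at hmem
        obtain ⟨z, hz, hzU⟩ := mem_closure_iff_nhds.mp hmem U hU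
        obtain ⟨m, hm, rfl⟩ := hzU
        exact hm.2 hz
      classical
      haveI : Infinite Z := Set.infinite_coe_iff.mpr hZ
      set φ : ℕ ↪o ℕ := Nat.orderEmbeddingOfSet Z
      have hrange : Set.range (φ : ℕ → ℕ) = Z := Nat.orderEmbeddingOfSet_range Z
      have htend : Tendsto (x ∘ (φ : ℕ → ℕ)) atTop (𝓝 y) := by
        rw [← Nat.cofinite_eq_atTop, Filter.tendsto_def]
        intro U hU
        rw [Filter.mem_cofinite]
        have hsub : ((x ∘ (φ : ℕ → ℕ)) ⁻¹' U)ᶜ ⊆ (φ : ℕ → ℕ) ⁻¹' {m | m ∈ Z ∧ x m ∉ U} := by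
          intro k hk
          refine ⟨?_, hk⟩
          rw [← hrange]; exact ⟨k, rfl⟩
        exact ((hfin U hU).preimage (φ.injective.injOn)).subset hsub
      exact h y (Set.mem_univ y) (φ : ℕ → ℕ) φ.strictMono htend
    obtain ⟨n, hn⟩ := H O hO hcov
    have hxn : x n ∈ ⋃ a ∈ {a : Set ℕ | a.Infinite ∧ n ∈ a}, O a := by
      rw [hn]; trivial
    simp only [Set.mem_iUnion, Set.mem_setOf_eq] at hxn
    obtain ⟨a, ⟨hainf, hna⟩, hxa⟩ := hxn
    exact hxa (subset_closure ⟨n, hna, rfl⟩)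
end

section
/- Let M be a set of ultrafilters over a set I and let A = ⋃_{D∈M} D ⊆ 𝒫(I). Then a topological space X is quasi M-compact if and only if the following holds: whenever (O_a)_{a∈A} is a family of open subsets of X such that ⋃_{a∈D} O_a = X for every D ∈ M, there exists i ∈ I such that ⋃{ O_a | a ∈ A and i ∈ a } = X. -/
/-- `X` is quasi `M`-compact if every `I`-indexed sequence `D`-converges for some `D ∈ M`. -/
def QuasiMCompact {I : Type*} (M : Set (Ultrafilter I)) (X : Type*)
    [TopologicalSpace X] : Prop :=
  ∀ x : I → X, ∃ D ∈ M, ∃ p : X, DConverges D x p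

theorem stmt_18 {I : Type*} (M : Set (Ultrafilter I)) (X : Type*) [TopologicalSpace X] :
    QuasiMCompact M X ↔
      ∀ O : Set I → Set X,
        (∀ a ∈ {a : Set I | ∃ D ∈ M, a ∈ D}, IsOpen (O a)) →
        (∀ D ∈ M, (⋃ a ∈ {a : Set I | a ∈ D}, O a) = Set.univ) →
        ∃ i : I,
          (⋃ a ∈ {a : Set I | (∃ D ∈ M, a ∈ D) ∧ i ∈ a}, O a) = Set.univ := by
  constructor
  · intro hc O hopen hcov
    by_contra h
    push_neg at h
    have hx : ∀ i, ∃ p : X, p ∉ ⋃ a ∈ {a : Set I | (∃ D ∈ M, a ∈ D) ∧ i ∈ a}, O a := by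
      intro i
      exact Set.ne_univ_iff_exists_notMem _ |>.mp (h i)
    choose x hx using hx
    obtain ⟨D, hD, p, hconv⟩ := hc x
    have hp : p ∈ ⋃ a ∈ {a : Set I | a ∈ D}, O a := by
      rw [hcov D hD]; trivial
    simp only [Set.mem_iUnion, Set.mem_setOf_eq] at hp
    obtain ⟨a, haD, hpa⟩ := hp
    have hO := hopen a ⟨D, hD, haD⟩
    have hmem : {i | x i ∈ O a} ∈ D := hconv _ (hO.mem_nhds hpa)
    have hne : ({i | x i ∈ O a} ∩ a : Set I).Nonempty :=
      Ultrafilter.nonempty_of_mem (Filter.inter_mem hmem haD)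
    obtain ⟨i, hi1, hi2⟩ := hne
    exact hx i (Set.mem_biUnion (⟨⟨D, hD, haD⟩, hi2⟩ : a ∈ {a : Set I | (∃ D ∈ M, a ∈ D) ∧ i ∈ a}) hi1)
  · intro hc x
    by_contra h
    push_neg at h
    simp only [DConverges, not_forall] at h
    set O : Set I → Set X := fun a => ⋃₀ {U | IsOpen U ∧ ∀ i ∈ a, x i ∉ U} with hO
    have hopen : ∀ a ∈ {a : Set I | ∃ D ∈ M, a ∈ D}, IsOpen (O a) := by
      intro a _
      exact isOpen_sUnion fun U hU => hU.1
    have hcov : ∀ D ∈ M, (⋃ a ∈ {a : Set I | a ∈ D}, O a) = Set.univ := by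
      intro D hD
      rw [Set.eq_univ_iff_forall]
      intro p
      obtain ⟨U, hU, hUD⟩ := h D hD p
      obtain ⟨V, hVU, hVopen, hpV⟩ := mem_nhds_iff.mp hU
      have hVD : {i | x i ∈ V} ∉ D := fun hmem =>
        hUD (D.toFilter.sets_of_superset hmem fun i hi => hVU hi)
      have ha : {i | x i ∈ V}ᶜ ∈ D := (Ultrafilter.compl_mem_iff_notMem).mpr hVD
      refine Set.mem_biUnion ha ⟨V, ⟨hVopen, ?_⟩, hpV⟩
      intro i hi
      exact hi
    obtain ⟨i, hi⟩ := hc O hopen hcov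
    have : x i ∈ ⋃ a ∈ {a : Set I | (∃ D ∈ M, a ∈ D) ∧ i ∈ a}, O a := by
      rw [hi]; trivial
    simp only [Set.mem_iUnion, Set.mem_setOf_eq] at this
    obtain ⟨a, ⟨_, hia⟩, hxa⟩ := this
    obtain ⟨V, ⟨_, hV⟩, hxV⟩ := hxa
    exact hV i hia hxV
end
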